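/- arXiv:1806.06512 — 2 statements merged into one kernel-verified Lean document; each statement's English description precedes it below -/
import Mathlib

section
/- Let M > 0 and τ ≥ 0 satisfy condition (★), and write t* := t*(M,τ). Then ‖y^τ(t*; y₀, u)‖ ≥ r for every u ∈ U_M; in particular, every optimal control u* for (TP)^τ_M steers the state exactly onto the sphere: ‖y^τ(t*; y₀, u*)‖ = r. -/
/-!
Below the minimal time `t*` no control reaches the closed ball of radius `r`, so for a fixed
control the continuous function `T ↦ ‖y^τ(T; y₀, u)‖` exceeds `r` on `[τ, t*)`; passing to the
limit gives `‖y^τ(t*; y₀, u)‖ ≥ r`. If `t* = τ` this is condition (★) itself. The infimum is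
a genuine one because the uncontrolled state `S T y₀` decays to `0`.
-/

open RealInnerProductSpace Filter Topology

section

variable {H : Type*} [NormedAddCommGroup H] [NormedSpace ℝ H]

/-- `t*(M, τ)` is the infimum of this set. -/
def reachableTimes (S : ℝ → H →L[ℝ] H) (P : H →L[ℝ] H) (y₀ : H) (r M τ : ℝ) : Set ℝ :=
  {T : ℝ | τ ≤ T ∧ ∃ u : H, ‖u‖ ≤ M ∧ ‖S T y₀ + S (T - τ) (P u)‖ ≤ r}

theorem tendsto_semigroup_apply_atTop_zero {S : ℝ → H →L[ℝ] H} {lam : ℝ} (hlam : 0 < lam)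
    (hSdecay : ∀ t : ℝ, 0 ≤ t → ∀ y : H, ‖S t y‖ ≤ Real.exp (-(lam * t)) * ‖y‖) (y : H) :
    Tendsto (fun t => S t y) atTop (𝓝 0) := by
  have hexp : Tendsto (fun t => Real.exp (-(lam * t)) * ‖y‖) atTop (𝓝 0) := by
    simpa using (Real.tendsto_exp_comp_nhds_zero.mpr
      (tendsto_neg_atTop_atBot.comp (tendsto_id.const_mul_atTop hlam))).mul_const ‖y‖
  exact squeeze_zero_norm' ((eventually_ge_atTop 0).mono fun t ht => hSdecay t ht y) hexp

theorem reachableTimes_nonempty {S : ℝ → H →L[ℝ] H} {lam : ℝ} (hlam : 0 < lam)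
    (hSdecay : ∀ t : ℝ, 0 ≤ t → ∀ y : H, ‖S t y‖ ≤ Real.exp (-(lam * t)) * ‖y‖)
    (P : H →L[ℝ] H) (y₀ : H) {r M : ℝ} (hr : 0 < r) (hM : 0 ≤ M) (τ : ℝ) :
    (reachableTimes S P y₀ r M τ).Nonempty := by
  have hsmall : ∀ᶠ T in atTop, ‖S T y₀‖ ≤ r :=
    (tendsto_norm_zero.comp (tendsto_semigroup_apply_atTop_zero hlam hSdecay y₀)).eventually
      (ge_mem_nhds hr)
  obtain ⟨T, hτT, hT⟩ := ((eventually_ge_atTop τ).and hsmall).exists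
  exact ⟨T, hτT, 0, by simpa using hM, by simpa using hT⟩

theorem continuousOn_state {S : ℝ → H →L[ℝ] H}
    (hScont : ∀ y : H, ContinuousOn (fun t => S t y) (Set.Ici 0)) (y₀ v : H) {τ : ℝ}
    (hτ : 0 ≤ τ) : ContinuousOn (fun T => S T y₀ + S (T - τ) v) (Set.Ici τ) := by
  refine ((hScont y₀).mono fun T hT => hτ.trans hT).add ?_
  exact (hScont v).comp (continuousOn_id.sub continuousOn_const)
    fun T (hT : τ ≤ T) => sub_nonneg.mpr hT

theorem le_norm_state_csInf_reachableTimes {S : ℝ → H →L[ℝ] H} (hS0 : S 0 = .id ℝ H)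
    (hScont : ∀ y : H, ContinuousOn (fun t => S t y) (Set.Ici 0)) {P : H →L[ℝ] H} {y₀ : H}
    {r M τ : ℝ} (hτ : 0 ≤ τ) (hne : (reachableTimes S P y₀ r M τ).Nonempty)
    (hstar : ∀ u : H, ‖u‖ ≤ M → r < ‖S τ y₀ + P u‖) {u : H} (hu : ‖u‖ ≤ M) :
    r ≤ ‖S (sInf (reachableTimes S P y₀ r M τ)) y₀ +
      S (sInf (reachableTimes S P y₀ r M τ) - τ) (P u)‖ := by
  set A := reachableTimes S P y₀ r M τ
  have hτt : τ ≤ sInf A := le_csInf hne fun T hT => hT.1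
  rcases hτt.eq_or_lt with heq | hlt
  · simpa [← heq, hS0] using (hstar u hu).le
  have hbelow : ∀ T ∈ Set.Ico τ (sInf A), r ≤ ‖S T y₀ + S (T - τ) (P u)‖ := fun T hT =>
    le_of_not_ge fun hle => hT.2.not_ge (csInf_le ⟨τ, fun _ h => h.1⟩ ⟨hT.1, u, hu, hle⟩)
  have hcont : ContinuousWithinAt (fun T => ‖S T y₀ + S (T - τ) (P u)‖) (Set.Ico τ (sInf A))
      (sInf A) :=
    ((continuousOn_state hScont y₀ (P u) hτ).norm (sInf A) hτt).mono Set.Ico_subset_Ici_self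
  have hmem : sInf A ∈ closure (Set.Ico τ (sInf A)) := by simp [closure_Ico hlt.ne, hτt]
  exact continuousWithinAt_const.closure_le (g := fun T => ‖S T y₀ + S (T - τ) (P u)‖) hmem
    hcont hbelow

end

theorem stmt_6_general
    {H : Type*} [NormedAddCommGroup H] [InnerProductSpace ℝ H]
    (lam : ℝ) (hlam : 0 < lam)
    (S : ℝ → H →L[ℝ] H)
    (hS0 : S 0 = ContinuousLinearMap.id ℝ H)
    (hScont : ∀ y : H, ContinuousOn (fun t => S t y) (Set.Ici (0 : ℝ)))
    (hSdecay : ∀ t : ℝ, 0 ≤ t → ∀ y : H, ‖S t y‖ ≤ Real.exp (-(lam * t)) * ‖y‖)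
    (P : H →L[ℝ] H)
    (y₀ : H) (r : ℝ) (hr : 0 < r)
    (tS : ℝ → ℝ → ℝ)
    (htS : ∀ M τ : ℝ, tS M τ =
      sInf {T : ℝ | τ ≤ T ∧ ∃ u : H, ‖u‖ ≤ M ∧ ‖S T y₀ + S (T - τ) (P u)‖ ≤ r})
    (M τ : ℝ) (hM : 0 < M) (hτ : 0 ≤ τ)
    (hstar : ∀ u : H, ‖u‖ ≤ M → r < ‖S τ y₀ + P u‖) :
    (∀ u : H, ‖u‖ ≤ M → r ≤ ‖S (tS M τ) y₀ + S (tS M τ - τ) (P u)‖) ∧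
    (∀ u : H, ‖u‖ ≤ M → ‖S (tS M τ) y₀ + S (tS M τ - τ) (P u)‖ ≤ r →
      ‖S (tS M τ) y₀ + S (tS M τ - τ) (P u)‖ = r) := by
  have hne := reachableTimes_nonempty hlam hSdecay P y₀ hr hM.le τ
  have hlower : ∀ u : H, ‖u‖ ≤ M → r ≤ ‖S (tS M τ) y₀ + S (tS M τ - τ) (P u)‖ := by
    rw [htS]
    exact fun u hu => le_norm_state_csInf_reachableTimes hS0 hScont hτ hne hstar hu
  exact ⟨hlower, fun u hu hle => le_antisymm hle (hlower u hu)⟩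

theorem stmt_6
    {H : Type*} [NormedAddCommGroup H] [InnerProductSpace ℝ H] [CompleteSpace H]
    (lam : ℝ) (hlam : 0 < lam)
    (S : ℝ → H →L[ℝ] H)
    (hS0 : S 0 = ContinuousLinearMap.id ℝ H)
    (hSadd : ∀ s t : ℝ, 0 ≤ s → 0 ≤ t → S (s + t) = (S s).comp (S t))
    (hSsa : ∀ t : ℝ, 0 ≤ t → ∀ x z : H, ⟪S t x, z⟫ = ⟪x, S t z⟫)
    (hScont : ∀ y : H, ContinuousOn (fun t => S t y) (Set.Ici (0 : ℝ)))
    (hSdecay : ∀ t : ℝ, 0 ≤ t → ∀ y : H, ‖S t y‖ ≤ Real.exp (-(lam * t)) * ‖y‖)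
    (P : H →L[ℝ] H)
    (hPsa : ∀ x z : H, ⟪P x, z⟫ = ⟪x, P z⟫)
    (hPnorm : ∀ u : H, ‖P u‖ ≤ ‖u‖)
    (y₀ : H) (r : ℝ) (hr : 0 < r)
    (tS : ℝ → ℝ → ℝ)
    (htS : ∀ M τ : ℝ, tS M τ =
      sInf {T : ℝ | τ ≤ T ∧ ∃ u : H, ‖u‖ ≤ M ∧ ‖S T y₀ + S (T - τ) (P u)‖ ≤ r})
    (M τ : ℝ) (hM : 0 < M) (hτ : 0 ≤ τ)
    (hstar : ∀ u : H, ‖u‖ ≤ M → r < ‖S τ y₀ + P u‖) :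
    (∀ u : H, ‖u‖ ≤ M → r ≤ ‖S (tS M τ) y₀ + S (tS M τ - τ) (P u)‖) ∧
    (∀ u : H, ‖u‖ ≤ M → ‖S (tS M τ) y₀ + S (tS M τ - τ) (P u)‖ ≤ r →
      ‖S (tS M τ) y₀ + S (tS M τ - τ) (P u)‖ = r) :=
  stmt_6_general lam hlam S hS0 hScont hSdecay P y₀ r hr tS htS M τ hM hτ hstar
end

section
/- (Strict monotonicity of the minimal time in the control bound; Step 1 of Proposition 3.2) Let M > 0, τ ≥ 0, and suppose ε₀ ∈ (0, M) is such that ‖S τ̃ y₀ + P u‖ > r for every τ̃ ∈ [max{0, τ−ε₀}, τ+ε₀] and every u ∈ H with ‖u‖ ≤ M + ε₀. Then for every τ̃ ∈ [max{0, τ−ε₀}, τ+ε₀] and all M₁, M₂ with M − ε₀ < M₁ < M₂ < M + ε₀, one has t*(M₂, τ̃) < t*(M₁, τ̃). -/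
/-!
The infimum `T₁` defining `t*(M₁, τ)` is attained: along a minimizing sequence of times the
controls have a weak cluster point `v`, and by self-adjointness of `S` and `P` the final states
converge weakly to the state `z` driven by `v`, so `‖z‖ ≤ r`. Robustness of the target rules out
`T₁ = τ`, so `s = T₁ - τ > 0`. If `z ≠ 0`, unique continuation makes `q = P (S s z)` nonzero, and
since `⟪z, S s (P q)⟫ = ‖q‖² > 0`, replacing `v` by `v - t • q` for small `t > 0` strictly
decreases `‖z‖` while keeping the control norm below `M₂`. By continuity of the trajectory the
target is then reached with control bound `M₂` strictly before `T₁`.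
-/

open RealInnerProductSpace Filter Topology Set

section HilbertSpace

variable {H : Type*} [NormedAddCommGroup H] [InnerProductSpace ℝ H]

theorem exists_ultrafilter_tendsto_inner_of_norm_le [CompleteSpace H] {ι : Type*}
    (l : Filter ι) [l.NeBot] {u : ι → H} {C : ℝ} (hu : ∀ i, ‖u i‖ ≤ C) :
    ∃ U : Ultrafilter ι, ↑U ≤ l ∧ ∃ v : H, ‖v‖ ≤ C ∧
      ∀ w, Tendsto (fun i => ⟪u i, w⟫) U (𝓝 ⟪v, w⟫) := by
  let f : ι → WeakDual ℝ H := fun i => StrongDual.toWeakDual (InnerProductSpace.toDual ℝ H (u i))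
  have hf : ∀ i, f i ∈ WeakDual.toStrongDual ⁻¹' Metric.closedBall 0 C := fun i => by
    simpa [f] using hu i
  obtain ⟨ℓ, hℓ, hfℓ⟩ := (WeakDual.isCompact_closedBall (0 : StrongDual ℝ H) C).ultrafilter_le_nhds
    ((Ultrafilter.of l).map f) (Ultrafilter.coe_map _ _ ▸ tendsto_principal.2 (.of_forall hf))
  refine ⟨Ultrafilter.of l, Ultrafilter.of_le l,
    (InnerProductSpace.toDual ℝ H).symm (WeakDual.toStrongDual ℓ), by simpa using hℓ, fun w => ?_⟩
  convert ((WeakDual.eval_continuous w).tendsto ℓ).comp hfℓ using 2 <;> simp [f]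

theorem tendsto_inner_of_weak_of_tendsto {ι : Type*} {l : Filter ι} {u w : ι → H} {v w₀ : H}
    {C : ℝ} (hu : ∀ i, ‖u i‖ ≤ C) (huv : ∀ w, Tendsto (fun i => ⟪u i, w⟫) l (𝓝 ⟪v, w⟫))
    (hw : Tendsto w l (𝓝 w₀)) : Tendsto (fun i => ⟪u i, w i⟫) l (𝓝 ⟪v, w₀⟫) := by
  have hsmall : Tendsto (fun i => ⟪u i, w i - w₀⟫) l (𝓝 0) := by
    refine squeeze_zero_norm (fun i => ?_)
      (by simpa using (tendsto_iff_norm_sub_tendsto_zero.1 hw).const_mul C)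
    calc ‖⟪u i, w i - w₀⟫‖ ≤ ‖u i‖ * ‖w i - w₀‖ := norm_inner_le_norm _ _
      _ ≤ C * ‖w i - w₀‖ := by gcongr; exact hu i
  simpa [inner_sub_right] using (huv w₀).add hsmall

theorem norm_le_of_tendsto_inner {ι : Type*} {l : Filter ι} [l.NeBot] {z : ι → H} {z₀ : H} {r : ℝ}
    (hz : ∀ i, ‖z i‖ ≤ r) (h : ∀ w, Tendsto (fun i => ⟪z i, w⟫) l (𝓝 ⟪z₀, w⟫)) : ‖z₀‖ ≤ r := by
  have : ‖z₀‖ ^ 2 ≤ r * ‖z₀‖ := by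
    rw [← real_inner_self_eq_norm_sq]
    refine le_of_tendsto' (h z₀) fun i => (real_inner_le_norm _ _).trans ?_
    gcongr; exact hz i
  have : Nonempty ι := l.nonempty_of_neBot
  nlinarith [norm_nonneg z₀, (norm_nonneg _).trans (hz (Classical.arbitrary ι))]

theorem eventually_norm_sub_smul_lt {z d : H} (h : 0 < ⟪z, d⟫) :
    ∀ᶠ t in 𝓝[>] (0 : ℝ), ‖z - t • d‖ < ‖z‖ := by
  have hsmall : ∀ᶠ t in 𝓝[>] (0 : ℝ), t * ‖d‖ ^ 2 < 2 * ⟪z, d⟫ := by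
    have hcont : Tendsto (fun t : ℝ => t * ‖d‖ ^ 2) (𝓝 0) (𝓝 0) := by
      simpa using (continuous_mul_const (‖d‖ ^ 2)).tendsto 0
    exact (hcont.eventually_lt_const (by linarith)).filter_mono nhdsWithin_le_nhds
  filter_upwards [hsmall, self_mem_nhdsWithin] with t ht ht0
  refine lt_of_pow_lt_pow_left₀ 2 (norm_nonneg _) ?_
  rw [norm_sub_sq_real, inner_smul_right, norm_smul, mul_pow, Real.norm_eq_abs, sq_abs]
  nlinarith [mem_Ioi.1 ht0]

section ImpulseControl

variable (S : ℝ → H →L[ℝ] H) (P : H →L[ℝ] H) (y₀ : H) (r : ℝ)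

def admissibleTimes (M τ : ℝ) : Set ℝ :=
  {T | τ ≤ T ∧ ∃ u : H, ‖u‖ ≤ M ∧ ‖S T y₀ + S (T - τ) (P u)‖ ≤ r}

variable {S P y₀ r}

theorem bddBelow_admissibleTimes (M τ : ℝ) : BddBelow (admissibleTimes S P y₀ r M τ) :=
  ⟨τ, fun _ hT => hT.1⟩

theorem admissibleTimes_nonempty {lam : ℝ} (hlam : 0 < lam)
    (hSdecay : ∀ t : ℝ, 0 ≤ t → ∀ y : H, ‖S t y‖ ≤ Real.exp (-(lam * t)) * ‖y‖)
    (hr : 0 < r) {M : ℝ} (hM : 0 ≤ M) (τ : ℝ) : (admissibleTimes S P y₀ r M τ).Nonempty := by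
  have hdecay : Tendsto (fun T : ℝ => Real.exp (-(lam * T)) * ‖y₀‖) atTop (𝓝 0) := by
    simpa using (Real.tendsto_exp_neg_atTop_nhds_zero.comp
      (tendsto_id.const_mul_atTop hlam)).mul_const ‖y₀‖
  obtain ⟨T, hTτ, hT0, hTr⟩ := ((eventually_ge_atTop τ).and
    ((eventually_ge_atTop 0).and (hdecay.eventually_lt_const hr))).exists
  exact ⟨T, hTτ, 0, by simpa using hM, by simpa using (hSdecay T hT0 y₀).trans hTr.le⟩

theorem tendsto_inner_state_of_weak_control
    (hSsa : ∀ t : ℝ, 0 ≤ t → ∀ x z : H, ⟪S t x, z⟫ = ⟪x, S t z⟫)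
    (hPsa : ∀ x z : H, ⟪P x, z⟫ = ⟪x, P z⟫)
    (hScont : ∀ y : H, ContinuousOn (fun t => S t y) (Ici 0))
    {ι : Type*} {l : Filter ι} {τ T₁ C : ℝ} {T : ι → ℝ} {u : ι → H} {v : H}
    (hτ : 0 ≤ τ) (hTτ : ∀ i, τ ≤ T i) (hT₁ : τ ≤ T₁) (hT : Tendsto T l (𝓝 T₁))
    (hu : ∀ i, ‖u i‖ ≤ C) (huv : ∀ w, Tendsto (fun i => ⟪u i, w⟫) l (𝓝 ⟪v, w⟫)) (w : H) :
    Tendsto (fun i => ⟪S (T i) y₀ + S (T i - τ) (P (u i)), w⟫) l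
      (𝓝 ⟪S T₁ y₀ + S (T₁ - τ) (P v), w⟫) := by
  have hS : ∀ {a : ℝ} {g : ι → ℝ} (y : H), 0 ≤ a → (∀ i, 0 ≤ g i) → Tendsto g l (𝓝 a) →
      Tendsto (fun i => S (g i) y) l (𝓝 (S a y)) := fun {a g} y ha hg hga =>
    (hScont y a ha).tendsto.comp (tendsto_nhdsWithin_iff.2 ⟨hga, .of_forall hg⟩)
  have hsub : ∀ i, 0 ≤ T i - τ := fun i => sub_nonneg.2 (hTτ i)
  have hcontrol := tendsto_inner_of_weak_of_tendsto hu huv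
    ((P.continuous.tendsto _).comp (hS w (sub_nonneg.2 hT₁) hsub (hT.sub_const τ)))
  have hfree : Tendsto (fun i => ⟪S (T i) y₀, w⟫) l (𝓝 ⟪S T₁ y₀, w⟫) :=
    (hS y₀ (hτ.trans hT₁) (fun i => hτ.trans (hTτ i)) hT).inner tendsto_const_nhds
  simp only [inner_add_left, hSsa _ (hsub _), hSsa _ (sub_nonneg.2 hT₁), hPsa]
  exact hfree.add hcontrol

theorem sInf_mem_admissibleTimes [CompleteSpace H]
    (hSsa : ∀ t : ℝ, 0 ≤ t → ∀ x z : H, ⟪S t x, z⟫ = ⟪x, S t z⟫)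
    (hPsa : ∀ x z : H, ⟪P x, z⟫ = ⟪x, P z⟫)
    (hScont : ∀ y : H, ContinuousOn (fun t => S t y) (Ici 0))
    {M τ : ℝ} (hτ : 0 ≤ τ) (hne : (admissibleTimes S P y₀ r M τ).Nonempty) :
    sInf (admissibleTimes S P y₀ r M τ) ∈ admissibleTimes S P y₀ r M τ := by
  obtain ⟨T, -, hT, hTmem⟩ := exists_seq_tendsto_sInf hne (bddBelow_admissibleTimes M τ)
  choose u hu hur using fun n => (hTmem n).2
  obtain ⟨U, hU, v, hv, huv⟩ := exists_ultrafilter_tendsto_inner_of_norm_le atTop hu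
  have hT₁ : τ ≤ sInf (admissibleTimes S P y₀ r M τ) := le_csInf hne fun _ hT => hT.1
  exact ⟨hT₁, v, hv, norm_le_of_tendsto_inner hur <|
    tendsto_inner_state_of_weak_control hSsa hPsa hScont hτ (fun n => (hTmem n).1) hT₁
      (hT.mono_left hU) hu huv⟩

theorem self_notMem_admissibleTimes (hS0 : S 0 = ContinuousLinearMap.id ℝ H) {M τ : ℝ}
    (h : ∀ u : H, ‖u‖ ≤ M → r < ‖S τ y₀ + P u‖) : τ ∉ admissibleTimes S P y₀ r M τ := by
  rintro ⟨-, u, hu, hur⟩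
  rw [sub_self, hS0] at hur
  exact (h u hu).not_ge hur

theorem exists_control_norm_lt
    (hSsa : ∀ t : ℝ, 0 ≤ t → ∀ x z : H, ⟪S t x, z⟫ = ⟪x, S t z⟫)
    (hPsa : ∀ x z : H, ⟪P x, z⟫ = ⟪x, P z⟫)
    (hUC : ∀ φ : H, φ ≠ 0 → ∀ t : ℝ, 0 < t → P (S t φ) ≠ 0)
    (hr : 0 < r) {s M : ℝ} (hs : 0 < s) {x v : H} (hv : ‖v‖ < M) (hxv : ‖x + S s (P v)‖ ≤ r) :
    ∃ u : H, ‖u‖ ≤ M ∧ ‖x + S s (P u)‖ < r := by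
  set z := x + S s (P v)
  by_cases hz : z = 0
  · exact ⟨v, hv.le, by simpa [z, hz] using hr⟩
  set q := P (S s z)
  have hdescent : 0 < ⟪z, S s (P q)⟫ := by
    rw [real_inner_comm, hSsa s hs.le, hPsa, real_inner_self_eq_norm_sq]
    exact pow_pos (norm_pos_iff.2 (hUC z hz s hs)) 2
  have hbound : ∀ᶠ t in 𝓝[>] (0 : ℝ), ‖v - t • q‖ < M := by
    have : Tendsto (fun t : ℝ => ‖v - t • q‖) (𝓝 0) (𝓝 ‖v‖) := by
      simpa using (continuous_const.sub (continuous_id.smul continuous_const) :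
        Continuous fun t : ℝ => v - t • q).norm.tendsto 0
    exact (this.eventually_lt_const hv).filter_mono nhdsWithin_le_nhds
  obtain ⟨t, hzt, hvt⟩ := ((eventually_norm_sub_smul_lt hdescent).and hbound).exists
  refine ⟨v - t • q, hvt.le, lt_of_lt_of_le ?_ hxv⟩
  have hstate : x + S s (P (v - t • q)) = z - t • S s (P q) := by
    rw [map_sub, map_sub, map_smul, map_smul, ← add_sub_assoc]
  rw [hstate]
  exact hzt

theorem sInf_admissibleTimes_lt (hScont : ∀ y : H, ContinuousOn (fun t => S t y) (Ici 0))
    {M τ T : ℝ} {u : H} (hτ : 0 ≤ τ) (hτT : τ < T) (hu : ‖u‖ ≤ M)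
    (hur : ‖S T y₀ + S (T - τ) (P u)‖ < r) : sInf (admissibleTimes S P y₀ r M τ) < T := by
  have hcont : ContinuousAt (fun T' => S T' y₀ + S (T' - τ) (P u)) T := by
    have hS : ∀ {a : ℝ} (y : H), 0 < a → ContinuousAt (fun t => S t y) a := fun y ha =>
      (hScont y).continuousAt (Ici_mem_nhds ha)
    exact (hS y₀ (hτ.trans_lt hτT)).add <| (hS (P u) (sub_pos.2 hτT)).comp
      (f := fun T' => T' - τ) (continuous_sub_right τ).continuousAt
  have hev : ∀ᶠ T' in 𝓝[<] T, τ ≤ T' ∧ ‖S T' y₀ + S (T' - τ) (P u)‖ < r :=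
    ((eventually_ge_nhds hτT).and (hcont.norm.eventually_lt_const hur)).filter_mono
      nhdsWithin_le_nhds
  obtain ⟨T', ⟨hτT', hT'r⟩, hT'T⟩ := (hev.and self_mem_nhdsWithin).exists
  exact (csInf_le (bddBelow_admissibleTimes M τ) ⟨hτT', u, hu, hT'r.le⟩).trans_lt hT'T

end ImpulseControl

end HilbertSpace

theorem stmt_13_general
    {H : Type*} [NormedAddCommGroup H] [InnerProductSpace ℝ H] [CompleteSpace H]
    (lam : ℝ) (hlam : 0 < lam)
    (S : ℝ → H →L[ℝ] H)
    (hS0 : S 0 = ContinuousLinearMap.id ℝ H)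
    (hSsa : ∀ t : ℝ, 0 ≤ t → ∀ x z : H, ⟪S t x, z⟫ = ⟪x, S t z⟫)
    (hScont : ∀ y : H, ContinuousOn (fun t => S t y) (Set.Ici (0 : ℝ)))
    (hSdecay : ∀ t : ℝ, 0 ≤ t → ∀ y : H, ‖S t y‖ ≤ Real.exp (-(lam * t)) * ‖y‖)
    (P : H →L[ℝ] H)
    (hPsa : ∀ x z : H, ⟪P x, z⟫ = ⟪x, P z⟫)
    (y₀ : H) (r : ℝ) (hr : 0 < r)
    (tS : ℝ → ℝ → ℝ)
    (htS : ∀ M τ : ℝ, tS M τ =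
      sInf {T : ℝ | τ ≤ T ∧ ∃ u : H, ‖u‖ ≤ M ∧ ‖S T y₀ + S (T - τ) (P u)‖ ≤ r})
    (hUC : ∀ φ : H, φ ≠ 0 → ∀ t : ℝ, 0 < t → P (S t φ) ≠ 0)
    (M τ ε₀ : ℝ) (hε₀M : ε₀ < M)
    (hrob : ∀ τ' : ℝ, max 0 (τ - ε₀) ≤ τ' → τ' ≤ τ + ε₀ →
      ∀ u : H, ‖u‖ ≤ M + ε₀ → r < ‖S τ' y₀ + P u‖) :
    ∀ τ' : ℝ, max 0 (τ - ε₀) ≤ τ' → τ' ≤ τ + ε₀ →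
      ∀ M₁ M₂ : ℝ, M - ε₀ < M₁ → M₁ < M₂ → M₂ < M + ε₀ →
        tS M₂ τ' < tS M₁ τ' := by
  intro τ' hτ'lo hτ'hi M₁ M₂ hM₁ h12 hM₂
  have hτ' : 0 ≤ τ' := (le_max_left _ _).trans hτ'lo
  rw [htS, htS]
  set T₁ := sInf (admissibleTimes S P y₀ r M₁ τ')
  change sInf (admissibleTimes S P y₀ r M₂ τ') < T₁
  have hT₁ : T₁ ∈ admissibleTimes S P y₀ r M₁ τ' := sInf_mem_admissibleTimes hSsa hPsa hScont hτ'
    (admissibleTimes_nonempty hlam hSdecay hr (by linarith) τ')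
  have hτ'_notMem : τ' ∉ admissibleTimes S P y₀ r M₁ τ' :=
    self_notMem_admissibleTimes hS0 fun u hu => hrob τ' hτ'lo hτ'hi u (by linarith)
  have hτ'T₁ : τ' < T₁ := hT₁.1.lt_of_ne fun h => hτ'_notMem (mem_of_eq_of_mem h hT₁)
  obtain ⟨-, v, hv, hvr⟩ := hT₁
  obtain ⟨u, hu, hur⟩ :=
    exists_control_norm_lt hSsa hPsa hUC hr (sub_pos.2 hτ'T₁) (hv.trans_lt h12) hvr
  exact sInf_admissibleTimes_lt hScont hτ' hτ'T₁ hu hur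

theorem stmt_13
    {H : Type*} [NormedAddCommGroup H] [InnerProductSpace ℝ H] [CompleteSpace H]
    (lam : ℝ) (hlam : 0 < lam)
    (S : ℝ → H →L[ℝ] H)
    (hS0 : S 0 = ContinuousLinearMap.id ℝ H)
    (hSadd : ∀ s t : ℝ, 0 ≤ s → 0 ≤ t → S (s + t) = (S s).comp (S t))
    (hSsa : ∀ t : ℝ, 0 ≤ t → ∀ x z : H, ⟪S t x, z⟫ = ⟪x, S t z⟫)
    (hScont : ∀ y : H, ContinuousOn (fun t => S t y) (Set.Ici (0 : ℝ)))
    (hSdecay : ∀ t : ℝ, 0 ≤ t → ∀ y : H, ‖S t y‖ ≤ Real.exp (-(lam * t)) * ‖y‖)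
    (P : H →L[ℝ] H)
    (hPsa : ∀ x z : H, ⟪P x, z⟫ = ⟪x, P z⟫)
    (hPnorm : ∀ u : H, ‖P u‖ ≤ ‖u‖)
    (y₀ : H) (r : ℝ) (hr : 0 < r)
    (tS : ℝ → ℝ → ℝ)
    (htS : ∀ M τ : ℝ, tS M τ =
      sInf {T : ℝ | τ ≤ T ∧ ∃ u : H, ‖u‖ ≤ M ∧ ‖S T y₀ + S (T - τ) (P u)‖ ≤ r})
    (hUC : ∀ φ : H, φ ≠ 0 → ∀ t : ℝ, 0 < t → P (S t φ) ≠ 0)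
    (M τ ε₀ : ℝ) (hM : 0 < M) (hτ : 0 ≤ τ) (hε₀ : 0 < ε₀) (hε₀M : ε₀ < M)
    (hrob : ∀ τ' : ℝ, max 0 (τ - ε₀) ≤ τ' → τ' ≤ τ + ε₀ →
      ∀ u : H, ‖u‖ ≤ M + ε₀ → r < ‖S τ' y₀ + P u‖) :
    ∀ τ' : ℝ, max 0 (τ - ε₀) ≤ τ' → τ' ≤ τ + ε₀ →
      ∀ M₁ M₂ : ℝ, M - ε₀ < M₁ → M₁ < M₂ → M₂ < M + ε₀ →
        tS M₂ τ' < tS M₁ τ' :=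
  stmt_13_general lam hlam S hS0 hSsa hScont hSdecay P hPsa y₀ r hr tS htS hUC M τ ε₀ hε₀M hrob
end
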